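/- Let F be a disjoint union of cycles on n vertices, and for each cycle C of F of length ℓ fix an admissible cyclic {3,4,5}-partition 𝔞^C of ℓ. Let (𝒳, R) be the associated F-partition with classes X^a_i of size c^F(a) and X^{a,b}_1 of size c^F(a,b), and let σ : V(F) → 𝒳 be the F-homomorphism obtained by walking each cycle C according to 𝔞^C. Then |σ^{-1}(X)| = |X| for every X ∈ 𝒳, and the orientation of F induced by the orientation of R is 1-regular (every vertex of F has exactly one in-edge and one out-edge). -/

import Mathlib

/-!
Walking around a cycle block by block, the first vertex of a block of size `b` preceded by a
block of size `a` lands in `X^{a,b}_1`, and the `i`-th vertex of a block of size `a` lands in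
`X^a_i`. So the fibre of `X^{a,b}_1` is in bijection with the cyclically consecutive pairs
`(a, b)` of the partitions, and the fibre of each `X^a_i` with the blocks of size `a`.
Since every block is nonempty, each vertex has exactly one successor and one predecessor along
its cycle, which is the orientation induced by `R`.
-/

open Finset

/-- Labels for the classes of an `F`-partition: `mid a i` is `X^a_i` (`2 ≤ i ≤ a`),
and `one a b` is `X^{a,b}_1`. -/
inductive ClassLabel where
  | mid (a i : ℕ)
  | one (a b : ℕ)
deriving DecidableEq

/-- The cyclic successor relation on the vertices of `F`: the vertex set of `F` is
`Σ C, Σ i, Fin (a C i)`, i.e. vertex `v_{C,i,j}`, and `Step u v` holds iff `v` is the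
successor of `u` when walking around the cycle `C` (block by block, following the
cyclic partition `𝔞^C = (a_{C,1},…,a_{C,t_C})`). This is exactly the orientation of
`F` induced by the orientation of the reduced graph `R`. -/
def Step (m : ℕ) (t : Fin m → ℕ) (a : Fin m → ℕ → ℕ)
    (u v : Σ C : Fin m, Σ i : Fin (t C), Fin (a C (i : ℕ))) : Prop :=
  u.1 = v.1 ∧
    (((u.2.1 : ℕ) = (v.2.1 : ℕ) ∧ (v.2.2 : ℕ) = (u.2.2 : ℕ) + 1) ∨
     ((u.2.2 : ℕ) + 1 = a u.1 (u.2.1 : ℕ) ∧ (v.2.2 : ℕ) = 0 ∧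
      (v.2.1 : ℕ) = ((u.2.1 : ℕ) + 1) % t u.1))

namespace Nat

-- `(i + n - 1) % n` is the cyclic predecessor of `i < n`; the `+ n` avoids truncation at `i = 0`.
theorem add_sub_one_mod_add_one_mod {n i : ℕ} (hi : i < n) : ((i + n - 1) % n + 1) % n = i := by
  rw [Nat.add_mod, Nat.mod_mod, ← Nat.add_mod, show i + n - 1 + 1 = i + n by omega,
    Nat.add_mod_right, Nat.mod_eq_of_lt hi]

theorem add_one_mod_add_sub_one_mod {n i : ℕ} (hi : i < n) : ((i + 1) % n + n - 1) % n = i := by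
  rw [Nat.add_sub_assoc (by omega), Nat.add_mod, Nat.mod_mod, ← Nat.add_mod,
    show i + 1 + (n - 1) = i + n by omega, Nat.add_mod_right, Nat.mod_eq_of_lt hi]

end Nat

abbrev CycleVertex (m : ℕ) (t : Fin m → ℕ) (a : Fin m → ℕ → ℕ) : Type :=
  Σ C : Fin m, Σ i : Fin (t C), Fin (a C i)

namespace CycleVertex

variable {m : ℕ} {t : Fin m → ℕ} {a : Fin m → ℕ → ℕ}

theorem ext_val {u v : CycleVertex m t a} (hC : u.1 = v.1) (hi : (u.2.1 : ℕ) = v.2.1)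
    (hj : (u.2.2 : ℕ) = v.2.2) : u = v := by
  obtain ⟨C, i, j⟩ := u
  obtain ⟨C', i', j'⟩ := v
  obtain rfl : C = C' := hC
  obtain rfl : i = i' := Fin.ext hi
  obtain rfl : j = j' := Fin.ext hj
  rfl

def next (hpos : ∀ C (i : Fin (t C)), 0 < a C i) (v : CycleVertex m t a) :
    CycleVertex m t a :=
  if h : (v.2.2 : ℕ) + 1 < a v.1 v.2.1 then ⟨v.1, v.2.1, ⟨v.2.2 + 1, h⟩⟩
  else ⟨v.1, ⟨(v.2.1 + 1) % t v.1, Nat.mod_lt _ v.2.1.pos⟩, ⟨0, hpos _ _⟩⟩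

def prev (hpos : ∀ C (i : Fin (t C)), 0 < a C i) (v : CycleVertex m t a) :
    CycleVertex m t a :=
  if h : (v.2.2 : ℕ) = 0 then
    ⟨v.1, ⟨(v.2.1 + t v.1 - 1) % t v.1, Nat.mod_lt _ v.2.1.pos⟩,
      ⟨a v.1 ((v.2.1 + t v.1 - 1) % t v.1) - 1,
        Nat.sub_lt (hpos v.1 ⟨_, Nat.mod_lt _ v.2.1.pos⟩) one_pos⟩⟩
  else ⟨v.1, v.2.1, ⟨v.2.2 - 1, by omega⟩⟩

theorem step_next (hpos : ∀ C (i : Fin (t C)), 0 < a C i) (u : CycleVertex m t a) :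
    Step m t a u (next hpos u) := by
  unfold next
  split_ifs with h
  · exact ⟨rfl, Or.inl ⟨rfl, rfl⟩⟩
  · exact ⟨rfl, Or.inr ⟨by have := u.2.2.isLt; omega, rfl, rfl⟩⟩

theorem eq_next_of_step (hpos : ∀ C (i : Fin (t C)), 0 < a C i) {u v : CycleVertex m t a}
    (huv : Step m t a u v) : v = next hpos u := by
  obtain ⟨C, i, j⟩ := u
  obtain ⟨C', i', j'⟩ := v
  obtain ⟨rfl, ⟨hi, hj⟩ | ⟨hj, hj', hi⟩⟩ := huv
  · obtain rfl : i = i' := Fin.ext hi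
    have hlt : (j : ℕ) + 1 < a C i := hj ▸ j'.isLt
    rw [next, dif_pos hlt]
    exact ext_val rfl rfl hj
  · rw [next, dif_neg (by dsimp only at hj ⊢; omega)]
    exact ext_val rfl hi hj'

theorem step_prev (hpos : ∀ C (i : Fin (t C)), 0 < a C i) (v : CycleVertex m t a) :
    Step m t a (prev hpos v) v := by
  unfold prev
  split_ifs with h
  · refine ⟨rfl, Or.inr ⟨?_, h, (Nat.add_sub_one_mod_add_one_mod v.2.1.isLt).symm⟩⟩
    have := hpos v.1 ⟨_, Nat.mod_lt ((v.2.1 : ℕ) + t v.1 - 1) v.2.1.pos⟩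
    dsimp only at this ⊢
    omega
  · exact ⟨rfl, Or.inl ⟨rfl, by dsimp only; omega⟩⟩

theorem eq_prev_of_step (hpos : ∀ C (i : Fin (t C)), 0 < a C i) {u v : CycleVertex m t a}
    (huv : Step m t a u v) : u = prev hpos v := by
  obtain ⟨C, i, j⟩ := u
  obtain ⟨C', i', j'⟩ := v
  obtain ⟨rfl, ⟨hi, hj⟩ | ⟨hj, hj', hi⟩⟩ := huv
  · obtain rfl : i = i' := Fin.ext hi
    rw [prev, dif_neg (by dsimp only at hj ⊢; omega)]
    exact ext_val rfl rfl (by dsimp only at hj ⊢; omega)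
  · dsimp only at hi hj hj'
    have hi' : (i : ℕ) = (i' + t C - 1) % t C := by
      rw [hi, Nat.add_one_mod_add_sub_one_mod i.isLt]
    rw [prev, dif_pos hj']
    exact ext_val rfl hi' (by dsimp only; rw [← hi']; omega)

theorem existsUnique_step_from (hpos : ∀ C (i : Fin (t C)), 0 < a C i)
    (u : CycleVertex m t a) : ∃! v, Step m t a u v :=
  ⟨next hpos u, step_next hpos u, fun _ => eq_next_of_step hpos⟩

theorem existsUnique_step_to (hpos : ∀ C (i : Fin (t C)), 0 < a C i)
    (v : CycleVertex m t a) : ∃! u, Step m t a u v :=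
  ⟨prev hpos v, step_prev hpos v, fun _ => eq_prev_of_step hpos⟩

-- The labelling `σ` of the paper: `X^{a_{i-1}, a_i}_1` on the first vertex of block `i`, and
-- `X^{a_i}_{j+1}` on its vertex `j` (positions are `0`-based).
def classOf (v : CycleVertex m t a) : ClassLabel :=
  if (v.2.2 : ℕ) = 0 then
    .one (a v.1 ((v.2.1 + t v.1 - 1) % t v.1)) (a v.1 v.2.1)
  else .mid (a v.1 v.2.1) (v.2.2 + 1)

theorem classOf_eq_one_iff {v : CycleVertex m t a} {x y : ℕ} :
    classOf v = .one x y ↔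
      (v.2.2 : ℕ) = 0 ∧ a v.1 ((v.2.1 + t v.1 - 1) % t v.1) = x ∧ a v.1 v.2.1 = y := by
  unfold classOf
  split_ifs with h <;> simp [h]

theorem classOf_eq_mid_iff {v : CycleVertex m t a} {x i : ℕ} :
    classOf v = .mid x i ↔ (v.2.2 : ℕ) ≠ 0 ∧ a v.1 v.2.1 = x ∧ (v.2.2 : ℕ) + 1 = i := by
  unfold classOf
  split_ifs with h <;> simp [h]

theorem card_classOf_eq_one (hpos : ∀ C (i : Fin (t C)), 0 < a C i) (x y : ℕ) :
    #{v : CycleVertex m t a | classOf v = .one x y} =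
      ∑ C, #{i ∈ range (t C) | a C i = x ∧ a C ((i + 1) % t C) = y} := by
  rw [← card_sigma]
  refine card_bij (fun v _ => ⟨v.1, (v.2.1 + t v.1 - 1) % t v.1⟩) ?_ ?_ ?_
  · rintro ⟨C, i, j⟩ hv
    simp only [mem_filter, mem_univ, true_and, classOf_eq_one_iff] at hv
    simp only [mem_sigma, mem_univ, mem_filter, mem_range, true_and,
      Nat.add_sub_one_mod_add_one_mod i.isLt]
    exact ⟨Nat.mod_lt _ i.pos, hv.2⟩
  · rintro ⟨C, i, j⟩ hu ⟨C', i', j'⟩ hv h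
    simp only [mem_filter, mem_univ, true_and, classOf_eq_one_iff] at hu hv
    obtain ⟨rfl, h⟩ := Sigma.mk.inj_iff.mp h
    refine ext_val rfl ?_ (hu.1.trans hv.1.symm)
    rw [← Nat.add_sub_one_mod_add_one_mod i.isLt, eq_of_heq h,
      Nat.add_sub_one_mod_add_one_mod i'.isLt]
  · rintro ⟨C, k⟩ hk
    simp only [mem_sigma, mem_univ, mem_filter, mem_range, true_and] at hk
    obtain ⟨hkt, hx, hy⟩ := hk
    let i : Fin (t C) := ⟨(k + 1) % t C, Nat.mod_lt _ (by omega)⟩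
    refine ⟨⟨C, i, ⟨0, hpos C i⟩⟩, ?_, ?_⟩
    · simp [i, classOf_eq_one_iff, Nat.add_one_mod_add_sub_one_mod hkt, hx, hy]
    · simp [i, Nat.add_one_mod_add_sub_one_mod hkt]

theorem card_classOf_eq_mid {x i : ℕ} (h2i : 2 ≤ i) (hix : i ≤ x) :
    #{v : CycleVertex m t a | classOf v = .mid x i} = ∑ C, #{j ∈ range (t C) | a C j = x} := by
  rw [← card_sigma]
  refine card_bij (fun v _ => ⟨v.1, v.2.1⟩) ?_ ?_ ?_
  · rintro ⟨C, k, j⟩ hv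
    simp only [mem_filter, mem_univ, true_and, classOf_eq_mid_iff] at hv
    simp [hv.2.1]
  · rintro ⟨C, k, j⟩ hu ⟨C', k', j'⟩ hv h
    simp only [mem_filter, mem_univ, true_and, classOf_eq_mid_iff] at hu hv
    obtain ⟨rfl, h⟩ := Sigma.mk.inj_iff.mp h
    dsimp only at hu hv h
    exact ext_val rfl (eq_of_heq h) (by dsimp only; omega)
  · rintro ⟨C, k⟩ hk
    simp only [mem_sigma, mem_univ, mem_filter, mem_range, true_and] at hk
    obtain ⟨hkt, hx⟩ := hk
    refine ⟨⟨C, ⟨k, hkt⟩, ⟨i - 1, by simp only [hx]; omega⟩⟩, ?_, rfl⟩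
    simp only [mem_filter, mem_univ, true_and, classOf_eq_mid_iff]
    exact ⟨by omega, hx, by omega⟩

end CycleVertex

theorem stmt_17_general (m : ℕ) (t : Fin m → ℕ)
    (a : Fin m → ℕ → ℕ)
    (hmem : ∀ (C : Fin m) (i : ℕ), a C (i % t C) ∈ ({3, 4, 5} : Finset ℕ))
    (σ : (Σ C : Fin m, Σ i : Fin (t C), Fin (a C (i : ℕ))) → ClassLabel)
    (hσ : ∀ v : Σ C : Fin m, Σ i : Fin (t C), Fin (a C (i : ℕ)),
      σ v = if (v.2.2 : ℕ) = 0
        then ClassLabel.one (a v.1 (((v.2.1 : ℕ) + t v.1 - 1) % t v.1))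
          (a v.1 (v.2.1 : ℕ))
        else ClassLabel.mid (a v.1 (v.2.1 : ℕ)) ((v.2.2 : ℕ) + 1)) :
    (∀ x ∈ ({3, 4, 5} : Finset ℕ), ∀ y ∈ ({3, 4, 5} : Finset ℕ),
      (Finset.univ.filter fun v => σ v = ClassLabel.one x y).card =
        ∑ C, ((Finset.range (t C)).filter fun i =>
          a C i = x ∧ a C ((i + 1) % t C) = y).card) ∧
    (∀ x ∈ ({3, 4, 5} : Finset ℕ), ∀ i : ℕ, 2 ≤ i → i ≤ x →
      (Finset.univ.filter fun v => σ v = ClassLabel.mid x i).card =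
        ∑ C, ((Finset.range (t C)).filter fun j => a C j = x).card) ∧
    (∀ u, ∃! v, Step m t a u v) ∧ (∀ v, ∃! u, Step m t a u v) := by
  have hpos : ∀ C (i : Fin (t C)), 0 < a C i := fun C i => by
    have h := hmem C i
    rw [Nat.mod_eq_of_lt i.isLt] at h
    simp only [mem_insert, mem_singleton] at h
    omega
  obtain rfl : σ = CycleVertex.classOf := funext hσ
  exact ⟨fun x _ y _ => CycleVertex.card_classOf_eq_one hpos x y,
    fun x _ i h2i hix => CycleVertex.card_classOf_eq_mid h2i hix,
    CycleVertex.existsUnique_step_from hpos, CycleVertex.existsUnique_step_to hpos⟩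

/-- Fact 4.4: for the `F`-homomorphism `σ` obtained by walking each cycle `C` of `F`
according to its admissible cyclic partition `𝔞^C`, each class `X ∈ 𝒳` receives exactly
`|X|` vertices (i.e. `c^F(a,b)` vertices in `X^{a,b}_1` and `c^F(a)` vertices in each
`X^a_i`), and the induced orientation of `F` is `1`-regular: every vertex has exactly
one out-neighbour and exactly one in-neighbour. -/
theorem stmt_17 (m : ℕ) (t : Fin m → ℕ) (ht : ∀ C, 0 < t C)
    (a : Fin m → ℕ → ℕ)
    (hmem : ∀ (C : Fin m) (i : ℕ), a C (i % t C) ∈ ({3, 4, 5} : Finset ℕ))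
    (hadm : ∀ (C : Fin m), ∀ x ∈ ({3, 4, 5} : Finset ℕ),
      ∀ y ∈ ({3, 4, 5} : Finset ℕ),
      ((Finset.range (t C)).filter fun i =>
          a C i = x ∧ a C ((i + 1) % t C) = y).card =
      ((Finset.range (t C)).filter fun i =>
          a C i = y ∧ a C ((i + 1) % t C) = x).card)
    (σ : (Σ C : Fin m, Σ i : Fin (t C), Fin (a C (i : ℕ))) → ClassLabel)
    (hσ : ∀ v : Σ C : Fin m, Σ i : Fin (t C), Fin (a C (i : ℕ)),
      σ v = if (v.2.2 : ℕ) = 0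
        then ClassLabel.one (a v.1 (((v.2.1 : ℕ) + t v.1 - 1) % t v.1))
          (a v.1 (v.2.1 : ℕ))
        else ClassLabel.mid (a v.1 (v.2.1 : ℕ)) ((v.2.2 : ℕ) + 1)) :
    (∀ x ∈ ({3, 4, 5} : Finset ℕ), ∀ y ∈ ({3, 4, 5} : Finset ℕ),
      (Finset.univ.filter fun v => σ v = ClassLabel.one x y).card =
        ∑ C, ((Finset.range (t C)).filter fun i =>
          a C i = x ∧ a C ((i + 1) % t C) = y).card) ∧
    (∀ x ∈ ({3, 4, 5} : Finset ℕ), ∀ i : ℕ, 2 ≤ i → i ≤ x →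
      (Finset.univ.filter fun v => σ v = ClassLabel.mid x i).card =
        ∑ C, ((Finset.range (t C)).filter fun j => a C j = x).card) ∧
    (∀ u, ∃! v, Step m t a u v) ∧ (∀ v, ∃! u, Step m t a u v) :=
  stmt_17_general m t a hmem σ hσ
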